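/- Let E and F be completely regular topological spaces and ψ : E → F continuous. Then composition x ↦ ψ ∘ x maps càdlàg functions [0,1] → E to càdlàg functions [0,1] → F, and the induced map Ψ : D([0,1],E) → D([0,1],F) is continuous for the Skorohod topologies. -/

import Mathlib

/-!
Composing with `ψ` preserves one-sided limits, so càdlàg paths go to càdlàg paths. For
continuity, fix a càdlàg `x₁` and one pseudometric `ζ j`. Compactness of `[0,1]` together with
the one-sided limits shows that a càdlàg path is covered by finitely many neighbourhoods of any
prescribed shape; a Lebesgue number argument then makes `ψ` uniformly continuous along `x₁`:
there are `k` and `δ` with `d k (x₁ s) b < δ → ζ j (ψ (x₁ s)) (ψ b) < ε` for all `s`, a single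
index `k` being available because the family `d` is directed. A time change witnessing
`skDist (d k) x₁ x < min δ ε` then also witnesses `skDist (ζ j) (ψ ∘ x₁) (ψ ∘ x) ≤ ε`, and the
reverse triangle inequality for Skorohod pseudometrics (whose symmetry needs inverse time
changes) makes every `x ↦ skDist (ζ j) y₀ (ψ ∘ x)` continuous.
-/

open Set Filter Topology

/-- A pseudometric on a set `E`: vanishes on the diagonal, symmetric, triangle
inequality (nonnegativity follows). -/
def IsPseudometric {E : Type*} (d : E → E → ℝ) : Prop :=
  (∀ a, d a a = 0) ∧ (∀ a b, d a b = d b a) ∧ (∀ a b c, d a c ≤ d a b + d b c)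

/-- The topology on `E` generated by a family of pseudometrics: the coarsest topology
making every map `x ↦ d i a x` continuous. -/
def pseudoTop {E : Type*} {ι : Sort*} (d : ι → E → E → ℝ) : TopologicalSpace E :=
  ⨅ (i : ι) (a : E), TopologicalSpace.induced (fun x => d i a x) inferInstance

/-- A function `f : ℝ → E` is càdlàg on `[0,1]`: right-continuous at every `t ∈ [0,1)`
and with left limits at every `t ∈ (0,1]`. -/
def Cadlag {E : Type*} [TopologicalSpace E] (f : ℝ → E) : Prop :=
  (∀ t ∈ Set.Ico (0:ℝ) 1, Filter.Tendsto f (𝓝[>] t) (𝓝 (f t))) ∧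
  (∀ t ∈ Set.Ioc (0:ℝ) 1, ∃ L, Filter.Tendsto f (𝓝[<] t) (𝓝 L))

/-- The set Λ of strictly increasing continuous maps of `[0,1]` onto itself. -/
def SkLambda : Set (ℝ → ℝ) :=
  {l | ContinuousOn l (Set.Icc 0 1) ∧ StrictMonoOn l (Set.Icc 0 1) ∧
    l '' Set.Icc 0 1 = Set.Icc 0 1}

/-- The Skorohod pseudometric associated to a pseudometric `d` on `E`:
`d̃(x,y) = inf_{λ∈Λ} max( sup_t |λ t − t|, sup_t d (x (λ t)) (y t) )`. -/
noncomputable def skDist {E : Type*} (d : E → E → ℝ) (x y : ℝ → E) : ℝ :=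
  sInf {r | ∃ l ∈ SkLambda,
    r = max (⨆ t : Set.Icc (0:ℝ) 1, |l t - (t : ℝ)|)
            (⨆ t : Set.Icc (0:ℝ) 1, d (x (l t)) (y t))}

/-- The Skorohod topology on a set `D` of functions `[0,1] → E` generated by the Skorohod
pseudometrics associated to a family of pseudometrics on `E`. -/
noncomputable def skTop {E : Type*} {κ : Type*} (D : Set (ℝ → E)) (fam : κ → E → E → ℝ) :
    TopologicalSpace D :=
  ⨅ (k : κ) (x : D), TopologicalSpace.induced
    (fun y : D => skDist (fam k) (x : ℝ → E) (y : ℝ → E)) inferInstance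

namespace IsPseudometric

variable {E : Type*} {d : E → E → ℝ}

theorem refl (hd : IsPseudometric d) (a : E) : d a a = 0 := hd.1 a

theorem symm (hd : IsPseudometric d) (a b : E) : d a b = d b a := hd.2.1 a b

theorem triangle (hd : IsPseudometric d) (a b c : E) : d a c ≤ d a b + d b c := hd.2.2 a b c

theorem abs_sub_le (hd : IsPseudometric d) (a b c : E) : |d c b - d c a| ≤ d a b := by
  rw [abs_sub_le_iff]
  constructor <;> linarith [hd.triangle c a b, hd.triangle c b a, hd.symm a b]

end IsPseudometric

theorem directed_of_forall_exists_max_le {E I : Type*} {d : I → E → E → ℝ}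
    (h : ∀ i i', ∃ k, ∀ a b, max (d i a b) (d i' a b) ≤ d k a b) : Directed (· ≤ ·) d :=
  fun i i' => (h i i').imp fun _ hk =>
    ⟨fun a b => (le_max_left _ _).trans (hk a b), fun a b => (le_max_right _ _).trans (hk a b)⟩

section PseudoTop

variable {E I : Type*} {d : I → E → E → ℝ} [tE : TopologicalSpace E]

theorem continuous_of_eq_pseudoTop (htd : tE = pseudoTop d) (i : I) (a : E) :
    Continuous (d i a) := by
  subst htd
  exact continuous_iff_le_induced.2 <|
    iInf₂_le (f := fun i a => TopologicalSpace.induced (d i a) inferInstance) i a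

theorem hasBasis_nhds_of_eq_pseudoTop [Nonempty I] (hd : ∀ i, IsPseudometric (d i))
    (hdir : Directed (· ≤ ·) d) (htd : tE = pseudoTop d) (a : E) :
    (𝓝 a).HasBasis (fun p : I × ℝ => 0 < p.2) fun p => {b | d p.1 a b < p.2} := by
  have hB : (⨅ (p : I × ℝ) (_ : 0 < p.2), 𝓟 {b | d p.1 a b < p.2}).HasBasis
      (fun p : I × ℝ => 0 < p.2) fun p => {b | d p.1 a b < p.2} := by
    refine hasBasis_biInf_principal' (fun p hp q hq => ?_) ⟨(Classical.arbitrary I, 1), one_pos⟩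
    obtain ⟨k, hpk, hqk⟩ := hdir p.1 q.1
    exact ⟨(k, min p.2 q.2), lt_min hp hq,
      fun b hb => (hpk a b).trans_lt (hb.trans_le (min_le_left _ _)),
      fun b hb => (hqk a b).trans_lt (hb.trans_le (min_le_right _ _))⟩
  convert hB
  refine le_antisymm (hB.ge_iff.2 fun p hp => ?_) ?_
  · exact (isOpen_lt (continuous_of_eq_pseudoTop htd p.1 a) continuous_const).mem_nhds
      (by simpa [(hd p.1).refl] using hp)
  · subst htd
    rw [pseudoTop, nhds_iInf]
    refine le_iInf fun i => ?_
    rw [nhds_iInf]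
    refine le_iInf fun c => ?_
    rw [nhds_induced, ← tendsto_iff_comap]
    refine (hB.tendsto_iff Metric.nhds_basis_ball).2 fun ε hε => ⟨(i, ε), hε, fun b hb => ?_⟩
    exact ((hd i).abs_sub_le a b c).trans_lt hb

end PseudoTop

section Cadlag

variable {E : Type*} [TopologicalSpace E] {x : ℝ → E}

theorem Continuous.comp_cadlag {F : Type*} [TopologicalSpace F] {ψ : E → F} (hψ : Continuous ψ)
    (hx : Cadlag x) : Cadlag (ψ ∘ x) :=
  ⟨fun t ht => (hψ.tendsto _).comp (hx.1 t ht),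
    fun t ht => let ⟨L, hL⟩ := hx.2 t ht; ⟨ψ L, (hψ.tendsto L).comp hL⟩⟩

theorem Cadlag.continuousWithinAt_Icc_inter_Ici (hx : Cadlag x) {t : ℝ} (ht : t ∈ Icc (0:ℝ) 1) :
    ContinuousWithinAt x (Icc 0 1 ∩ Ici t) t := by
  rcases ht.2.lt_or_eq with h | rfl
  · exact (continuousWithinAt_Ioi_iff_Ici.1 (hx.1 t ⟨ht.1, h⟩)).mono inter_subset_right
  · exact continuousWithinAt_singleton.mono fun s hs => le_antisymm hs.1.2 hs.2

theorem Cadlag.exists_tendsto_Icc_inter_Iio (hx : Cadlag x) {t : ℝ} (ht : t ∈ Icc (0:ℝ) 1) :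
    ∃ L, Tendsto x (𝓝[Icc 0 1 ∩ Iio t] t) (𝓝 L) := by
  rcases ht.1.lt_or_eq with h | rfl
  · exact (hx.2 t ⟨h, ht.2⟩).imp fun L hL => hL.mono_left (nhdsWithin_mono _ inter_subset_right)
  · refine ⟨x 0, ?_⟩
    rw [show Icc (0:ℝ) 1 ∩ Iio 0 = ∅ from eq_empty_of_forall_notMem fun s hs => hs.2.not_ge hs.1.1,
      nhdsWithin_empty]
    exact tendsto_bot

/-- `[0,1]` is compact, and near each `t` the path stays in `U (x t)` on the right of `t` and in
`U L` on its left, `L` being the left limit at `t`. -/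
theorem Cadlag.exists_finset_cover (hx : Cadlag x) (U : E → Set E) (hU : ∀ a, U a ∈ 𝓝 a) :
    ∃ A : Finset E, ∀ t ∈ Icc (0:ℝ) 1, ∃ a ∈ A, x t ∈ U a := by
  classical
  refine isCompact_Icc.induction_on (p := fun S => ∃ A : Finset E, ∀ t ∈ S, ∃ a ∈ A, x t ∈ U a)
    ⟨∅, by simp⟩ (fun S T hST ⟨A, hA⟩ => ⟨A, fun t ht => hA t (hST ht)⟩)
    (fun S T ⟨A, hA⟩ ⟨B, hB⟩ => ⟨A ∪ B, fun t ht => ht.elim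
      (fun h => (hA t h).imp fun _ ⟨ha, hxa⟩ => ⟨Finset.mem_union_left _ ha, hxa⟩)
      (fun h => (hB t h).imp fun _ ⟨ha, hxa⟩ => ⟨Finset.mem_union_right _ ha, hxa⟩)⟩) ?_
  intro t ht
  obtain ⟨L, hL⟩ := hx.exists_tendsto_Icc_inter_Iio ht
  have hsplit : Icc (0:ℝ) 1 = (Icc 0 1 ∩ Iio t) ∪ (Icc 0 1 ∩ Ici t) := by
    rw [← inter_union_distrib_left, Iio_union_Ici, inter_univ]
  refine ⟨x ⁻¹' U L ∪ x ⁻¹' U (x t), ?_, {L, x t}, fun s hs => ?_⟩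
  · rw [hsplit, nhdsWithin_union]
    exact union_mem_sup (hL (hU L)) (hx.continuousWithinAt_Icc_inter_Ici ht (hU (x t)))
  · rcases hs with hs | hs
    · exact ⟨L, by simp, hs⟩
    · exact ⟨x t, by simp, hs⟩

/-- The real `⨆` in `skDist` is `0` on unbounded families, so the Skorohod estimates only hold
for bounded paths. -/
def PathBounded {E : Type*} (d : E → E → ℝ) (x : ℝ → E) : Prop :=
  ∃ M, ∀ t ∈ Icc (0:ℝ) 1, d (x 0) (x t) ≤ M

theorem Cadlag.pathBounded {d : E → E → ℝ} (hd : IsPseudometric d)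
    (hdc : ∀ a, Continuous (d a)) (hx : Cadlag x) : PathBounded d x := by
  obtain ⟨A, hA⟩ := hx.exists_finset_cover (fun a => {b | d a b < 1})
    fun a => (isOpen_lt (hdc a) continuous_const).mem_nhds (by simp [hd.refl])
  obtain ⟨M, hM⟩ := (A.finite_toSet.image (d (x 0))).bddAbove
  refine ⟨M + 1, fun t ht => ?_⟩
  obtain ⟨a, haA, hat⟩ := hA t ht
  calc d (x 0) (x t) ≤ d (x 0) a + d a (x t) := hd.triangle _ _ _
    _ ≤ M + 1 := add_le_add (hM (mem_image_of_mem _ haA)) (le_of_lt hat)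

/-- A Lebesgue number argument on a finite cover of the path by half-radius balls. -/
theorem Cadlag.exists_uniform_continuity {F I : Type*} [Nonempty I] [TopologicalSpace F]
    {d : I → E → E → ℝ} {z : F → F → ℝ} {ψ : E → F} (hd : ∀ i, IsPseudometric (d i))
    (hdir : Directed (· ≤ ·) d) (htd : ‹TopologicalSpace E› = pseudoTop d)
    (hz : IsPseudometric z) (hzc : ∀ c, Continuous (z c)) (hψ : Continuous ψ)
    (hx : Cadlag x) {ε : ℝ} (hε : 0 < ε) :
    ∃ k δ, 0 < δ ∧ ∀ s ∈ Icc (0:ℝ) 1, ∀ b, d k (x s) b < δ → z (ψ (x s)) (ψ b) < ε := by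
  classical
  have hbasis := hasBasis_nhds_of_eq_pseudoTop hd hdir htd
  have hloc : ∀ a, ∃ p : I × ℝ, 0 < p.2 ∧ ∀ b, d p.1 a b < p.2 → z (ψ a) (ψ b) < ε / 2 :=
    fun a => (hbasis a).mem_iff.1 <| hψ.continuousAt.preimage_mem_nhds <|
      (isOpen_lt (hzc _) continuous_const).mem_nhds (by simp [hz.refl, hε])
  choose p hp hψp using hloc
  obtain ⟨A, hA⟩ := hx.exists_finset_cover (fun a => {b | d (p a).1 a b < (p a).2 / 2})
    fun a => (hbasis a).mem_of_mem (i := ((p a).1, (p a).2 / 2)) (half_pos (hp a))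
  obtain ⟨a₀, ha₀, -⟩ := hA 0 (by simp)
  obtain ⟨k, hk⟩ := hdir.finset_le (A.image fun a => (p a).1)
  refine ⟨k, A.inf' ⟨a₀, ha₀⟩ fun a => (p a).2 / 2,
    (Finset.lt_inf'_iff _).2 fun a _ => half_pos (hp a), fun s _ b hb => ?_⟩
  obtain ⟨a, haA, has⟩ : ∃ a ∈ A, d (p a).1 a (x s) < (p a).2 / 2 := hA s ‹_›
  have hkb : d (p a).1 (x s) b < (p a).2 / 2 :=
    ((hk _ (Finset.mem_image_of_mem _ haA)) (x s) b).trans_lt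
      (hb.trans_le (Finset.inf'_le _ haA))
  have hab : d (p a).1 a b < (p a).2 := by
    linarith [(hd (p a).1).triangle a (x s) b]
  calc z (ψ (x s)) (ψ b) ≤ z (ψ a) (ψ (x s)) + z (ψ a) (ψ b) := by
        rw [hz.symm (ψ a)]; exact hz.triangle _ _ _
    _ < ε / 2 + ε / 2 := add_lt_add (hψp a _ (by linarith [hp a])) (hψp a b hab)
    _ = ε := add_halves ε

end Cadlag

theorem mapsTo_of_mem_skLambda {l : ℝ → ℝ} (hl : l ∈ SkLambda) :
    MapsTo l (Icc 0 1) (Icc 0 1) :=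
  fun _ ht => hl.2.2 ▸ mem_image_of_mem l ht

theorem id_mem_skLambda : (id : ℝ → ℝ) ∈ SkLambda :=
  ⟨continuousOn_id, strictMonoOn_id, image_id _⟩

theorem comp_mem_skLambda {l₁ l₂ : ℝ → ℝ} (h₁ : l₁ ∈ SkLambda) (h₂ : l₂ ∈ SkLambda) :
    l₁ ∘ l₂ ∈ SkLambda :=
  ⟨h₁.1.comp h₂.1 (mapsTo_of_mem_skLambda h₂),
    h₁.2.1.comp h₂.2.1 (mapsTo_of_mem_skLambda h₂), by rw [image_comp, h₂.2.2, h₁.2.2]⟩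

/-- The inverse is read off the order isomorphism `[0,1] ≃o [0,1]` induced by `l`, which is
automatically continuous. -/
theorem exists_rightInvOn_of_mem_skLambda {l : ℝ → ℝ} (hl : l ∈ SkLambda) :
    ∃ m ∈ SkLambda, RightInvOn m l (Icc 0 1) := by
  let e : Icc (0:ℝ) 1 ≃o Icc (0:ℝ) 1 :=
    (hl.2.1.orderIso l (Icc 0 1)).trans (OrderIso.setCongr _ _ hl.2.2)
  let m : ℝ → ℝ := IccExtend zero_le_one fun t => (e.symm t : ℝ)
  have hm : ∀ t (ht : t ∈ Icc (0:ℝ) 1), m t = e.symm ⟨t, ht⟩ := fun t ht => IccExtend_of_mem _ _ ht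
  refine ⟨m, ⟨?_, fun s hs t ht hst => ?_, ?_⟩, fun t ht => ?_⟩
  · exact (continuous_subtype_val.comp e.symm.continuous).Icc_extend'.continuousOn
  · rw [hm s hs, hm t ht]
    exact e.symm.strictMono hst
  · refine (MapsTo.image_subset fun t ht => hm t ht ▸ (e.symm _).2).antisymm fun s hs => ?_
    refine ⟨e ⟨s, hs⟩, (e ⟨s, hs⟩).2, ?_⟩
    rw [hm _ (e ⟨s, hs⟩).2, Subtype.coe_eta, e.symm_apply_apply]
  · rw [hm t ht]
    exact congrArg Subtype.val (e.apply_symm_apply ⟨t, ht⟩)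

theorem bddAbove_range_abs_sub_of_mem_skLambda {l : ℝ → ℝ} (hl : l ∈ SkLambda) :
    BddAbove (range fun t : Icc (0:ℝ) 1 => |l t - t|) := by
  refine ⟨1, forall_mem_range.2 fun t => abs_sub_le_iff.2 ⟨?_, ?_⟩⟩ <;>
    linarith [t.2.1, t.2.2, (mapsTo_of_mem_skLambda hl t.2).1, (mapsTo_of_mem_skLambda hl t.2).2]

section SkDist

variable {E : Type*} {d : E → E → ℝ} {x y z : ℝ → E}

theorem skDist_nonneg (d : E → E → ℝ) (x y : ℝ → E) : 0 ≤ skDist d x y := by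
  refine le_csInf ⟨_, id, id_mem_skLambda, rfl⟩ ?_
  rintro _ ⟨l, -, rfl⟩
  exact le_max_of_le_left (Real.iSup_nonneg fun _ => abs_nonneg _)

theorem skDist_le_of_forall {l : ℝ → ℝ} (hl : l ∈ SkLambda) {c : ℝ}
    (h₁ : ∀ t ∈ Icc (0:ℝ) 1, |l t - t| ≤ c) (h₂ : ∀ t ∈ Icc (0:ℝ) 1, d (x (l t)) (y t) ≤ c) :
    skDist d x y ≤ c := by
  refine le_trans (csInf_le ?_ ⟨l, hl, rfl⟩)
    (max_le (ciSup_le fun t => h₁ t t.2) (ciSup_le fun t => h₂ t t.2))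
  refine ⟨0, ?_⟩
  rintro _ ⟨l', -, rfl⟩
  exact le_max_of_le_left (Real.iSup_nonneg fun _ => abs_nonneg _)

theorem PathBounded.bddAbove_range (hd : IsPseudometric d) (hx : PathBounded d x)
    (hy : PathBounded d y) {l : ℝ → ℝ} (hl : l ∈ SkLambda) :
    BddAbove (range fun t : Icc (0:ℝ) 1 => d (x (l t)) (y t)) := by
  obtain ⟨Mx, hMx⟩ := hx
  obtain ⟨My, hMy⟩ := hy
  refine ⟨Mx + d (x 0) (y 0) + My, forall_mem_range.2 fun t => ?_⟩
  linarith [hd.triangle (x (l t)) (x 0) (y t), hd.triangle (x 0) (y 0) (y t),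
    hd.symm (x (l t)) (x 0), hMx _ (mapsTo_of_mem_skLambda hl t.2), hMy t t.2]

theorem exists_of_skDist_lt (hd : IsPseudometric d) (hx : PathBounded d x)
    (hy : PathBounded d y) {r : ℝ} (h : skDist d x y < r) :
    ∃ l ∈ SkLambda, ∀ t ∈ Icc (0:ℝ) 1, |l t - t| < r ∧ d (x (l t)) (y t) < r := by
  obtain ⟨_, ⟨l, hl, rfl⟩, hlr⟩ :=
    exists_lt_of_csInf_lt (by exact ⟨_, id, id_mem_skLambda, rfl⟩) h
  refine ⟨l, hl, fun t ht => ⟨?_, ?_⟩⟩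
  · exact (le_ciSup (bddAbove_range_abs_sub_of_mem_skLambda hl) ⟨t, ht⟩).trans_lt
      ((le_max_left _ _).trans_lt hlr)
  · exact (le_ciSup (hx.bddAbove_range hd hy hl) ⟨t, ht⟩).trans_lt
      ((le_max_right _ _).trans_lt hlr)

theorem skDist_self (hd : IsPseudometric d) (x : ℝ → E) : skDist d x x = 0 :=
  le_antisymm (skDist_le_of_forall id_mem_skLambda (by simp) (by simp [hd.refl]))
    (skDist_nonneg d x x)

theorem skDist_le_skDist_swap (hd : IsPseudometric d) (hx : PathBounded d x)
    (hy : PathBounded d y) : skDist d y x ≤ skDist d x y := by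
  refine le_of_forall_gt_imp_ge_of_dense fun r hr => ?_
  obtain ⟨l, hl, hlr⟩ := exists_of_skDist_lt hd hx hy hr
  obtain ⟨m, hm, hlm⟩ := exists_rightInvOn_of_mem_skLambda hl
  refine skDist_le_of_forall hm (fun t ht => ?_) (fun t ht => ?_) <;>
    obtain ⟨h₁, h₂⟩ := hlr _ (mapsTo_of_mem_skLambda hm ht) <;> rw [hlm ht] at h₁ h₂
  · exact (abs_sub_comm _ _).trans_le h₁.le
  · exact (hd.symm _ _).trans_le h₂.le

theorem skDist_comm (hd : IsPseudometric d) (hx : PathBounded d x) (hy : PathBounded d y) :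
    skDist d x y = skDist d y x :=
  le_antisymm (skDist_le_skDist_swap hd hy hx) (skDist_le_skDist_swap hd hx hy)

theorem skDist_triangle (hd : IsPseudometric d) (hx : PathBounded d x) (hy : PathBounded d y)
    (hz : PathBounded d z) : skDist d x z ≤ skDist d x y + skDist d y z := by
  refine le_of_forall_pos_le_add fun ε hε => ?_
  obtain ⟨l₁, hl₁, h₁⟩ := exists_of_skDist_lt hd hx hy (lt_add_of_pos_right _ (half_pos hε))
  obtain ⟨l₂, hl₂, h₂⟩ := exists_of_skDist_lt hd hy hz (lt_add_of_pos_right _ (half_pos hε))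
  have hmem : ∀ t ∈ Icc (0:ℝ) 1, l₂ t ∈ Icc (0:ℝ) 1 := fun t ht => mapsTo_of_mem_skLambda hl₂ ht
  suffices skDist d x z ≤ (skDist d x y + ε / 2) + (skDist d y z + ε / 2) by linarith
  refine skDist_le_of_forall (comp_mem_skLambda hl₁ hl₂) (fun t ht => ?_) (fun t ht => ?_)
  · calc |l₁ (l₂ t) - t| ≤ |l₁ (l₂ t) - l₂ t| + |l₂ t - t| := abs_sub_le _ _ _
      _ ≤ (skDist d x y + ε / 2) + (skDist d y z + ε / 2) :=
        add_le_add (h₁ _ (hmem t ht)).1.le (h₂ t ht).1.le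
  · calc d (x (l₁ (l₂ t))) (z t) ≤ d (x (l₁ (l₂ t))) (y (l₂ t)) + d (y (l₂ t)) (z t) :=
          hd.triangle _ _ _
      _ ≤ (skDist d x y + ε / 2) + (skDist d y z + ε / 2) :=
        add_le_add (h₁ _ (hmem t ht)).2.le (h₂ t ht).2.le

theorem abs_skDist_sub_skDist_le (hd : IsPseudometric d) (hx : PathBounded d x)
    (hy : PathBounded d y) (hz : PathBounded d z) :
    |skDist d x y - skDist d x z| ≤ skDist d y z :=
  abs_sub_le_iff.2
    ⟨by linarith [skDist_triangle hd hx hz hy, skDist_comm hd hz hy],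
      by linarith [skDist_triangle hd hx hy hz]⟩

theorem skDist_comp_le {F : Type*} {ζ : F → F → ℝ} {ψ : E → F} (hd : IsPseudometric d)
    (hx : PathBounded d x) (hy : PathBounded d y) {δ ε : ℝ}
    (hψ : ∀ s ∈ Icc (0:ℝ) 1, ∀ b, d (x s) b < δ → ζ (ψ (x s)) (ψ b) < ε)
    (h : skDist d x y < min δ ε) : skDist ζ (ψ ∘ x) (ψ ∘ y) ≤ ε := by
  obtain ⟨l, hl, hlr⟩ := exists_of_skDist_lt hd hx hy h
  refine skDist_le_of_forall hl (fun t ht => ((hlr t ht).1.trans_le (min_le_right _ _)).le)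
    fun t ht => (hψ _ (mapsTo_of_mem_skLambda hl ht) _ ?_).le
  exact (hlr t ht).2.trans_le (min_le_left _ _)

end SkDist

section SkTop

variable {E : Type*} {I : Type*}

theorem continuous_skTop_rng {X F J : Type*} {tX : TopologicalSpace X} {D : Set (ℝ → F)}
    {ζ : J → F → F → ℝ} {f : X → D}
    (h : ∀ j (y : D), Continuous fun x => skDist (ζ j) y (f x)) :
    Continuous[tX, skTop D ζ] f :=
  continuous_iInf_rng.2 fun j => continuous_iInf_rng.2 fun y => continuous_induced_rng.2 (h j y)

theorem setOf_skDist_lt_mem_nhds {D : Set (ℝ → E)} {d : I → E → E → ℝ} {k : I}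
    (hd : IsPseudometric (d k)) (x : D) {δ : ℝ} (hδ : 0 < δ) :
    {y : D | skDist (d k) x y < δ} ∈ @nhds D (skTop D d) x := by
  let _ : TopologicalSpace D := skTop D d
  have hcont : Continuous[skTop D d, _] fun y : D => skDist (d k) x y :=
    continuous_iInf_dom (continuous_iInf_dom continuous_induced_dom)
  exact (isOpen_lt hcont continuous_const).mem_nhds (by simpa [skDist_self hd] using hδ)

theorem continuous_skDist_of_forall_eventually_lt {X F : Type*} {tX : TopologicalSpace X}
    {ζ : F → F → ℝ} {f : X → ℝ → F} {y₀ : ℝ → F} (hζ : IsPseudometric ζ)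
    (hf : ∀ x, PathBounded ζ (f x)) (hy₀ : PathBounded ζ y₀)
    (h : ∀ x₁, ∀ ε > 0, ∀ᶠ x in 𝓝 x₁, skDist ζ (f x₁) (f x) < ε) :
    Continuous fun x => skDist ζ y₀ (f x) :=
  Metric.continuous_iff'.2 fun x₁ ε hε => (h x₁ ε hε).mono fun x hx => by
    rw [Real.dist_eq, abs_sub_comm]
    exact (abs_skDist_sub_skDist_le hζ hy₀ (hf x₁) (hf x)).trans_lt hx

theorem eventually_skDist_comp_lt {F : Type*} [tE : TopologicalSpace E] [TopologicalSpace F]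
    [Nonempty I] {d : I → E → E → ℝ} {ζ : F → F → ℝ} {ψ : E → F}
    (hd : ∀ i, IsPseudometric (d i)) (hdir : Directed (· ≤ ·) d) (htd : tE = pseudoTop d)
    (hζ : IsPseudometric ζ) (hζc : ∀ c, Continuous (ζ c)) (hψ : Continuous ψ)
    {D : Set (ℝ → E)} (hD : ∀ x ∈ D, Cadlag x) (x₁ : D) {ε : ℝ} (hε : 0 < ε) :
    ∀ᶠ x : D in @nhds D (skTop D d) x₁, skDist ζ (ψ ∘ (x₁ : ℝ → E)) (ψ ∘ (x : ℝ → E)) < ε := by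
  obtain ⟨k, δ, hδ, hunif⟩ :=
    (hD x₁ x₁.2).exists_uniform_continuity hd hdir htd hζ hζc hψ (half_pos hε)
  have hbdd : ∀ x ∈ D, PathBounded (d k) x :=
    fun x hx => (hD x hx).pathBounded (hd k) (continuous_of_eq_pseudoTop htd k)
  filter_upwards [setOf_skDist_lt_mem_nhds (hd k) x₁ (lt_min hδ (half_pos hε))] with x hx
  exact (skDist_comp_le (hd k) (hbdd x₁ x₁.2) (hbdd x x.2) hunif hx).trans_lt (half_lt_self hε)

end SkTop

theorem skorohod_composition_continuous_general {E F : Type*} {I J : Type*}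
    [tE : TopologicalSpace E]
    [tF : TopologicalSpace F]
    (d : I → E → E → ℝ) (ζ : J → F → F → ℝ)
    (hd : ∀ i, IsPseudometric (d i)) (hζ : ∀ j, IsPseudometric (ζ j))
    (hdsep : ∀ a b : E, a ≠ b → ∃ i, 0 < d i a b)
    (hddir : ∀ i i', ∃ k, ∀ a b, max (d i a b) (d i' a b) ≤ d k a b)
    (htd : tE = pseudoTop d) (htζ : tF = pseudoTop ζ)
    (ψ : E → F) (hψ : Continuous ψ) :
    (∀ x : ℝ → E, Cadlag x → Cadlag (ψ ∘ x)) ∧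
    ∃ Ψ : {x : ℝ → E | Cadlag x} → {y : ℝ → F | Cadlag y},
      (∀ x t, (Ψ x : ℝ → F) t = ψ ((x : ℝ → E) t)) ∧
      @Continuous _ _ (skTop {x : ℝ → E | Cadlag x} d) (skTop {y : ℝ → F | Cadlag y} ζ)
        Ψ := by
  refine ⟨fun x => hψ.comp_cadlag, fun x => ⟨ψ ∘ x, hψ.comp_cadlag x.2⟩, fun _ _ => rfl, ?_⟩
  rcases isEmpty_or_nonempty I with hI | hI
  · have : Subsingleton E :=
      ⟨fun a b => by_contra fun hab => hI.elim (hdsep a b hab).choose⟩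
    exact @continuous_of_const _ _ (skTop _ d) (skTop _ ζ) _
      fun x y => by rw [Subsingleton.elim x y]
  have hbdd (j : J) (y : ℝ → F) (hy : Cadlag y) : PathBounded (ζ j) y :=
    hy.pathBounded (hζ j) (continuous_of_eq_pseudoTop htζ j)
  refine continuous_skTop_rng fun j y₀ => continuous_skDist_of_forall_eventually_lt (hζ j)
    (fun x => hbdd j _ (hψ.comp_cadlag x.2)) (hbdd j _ y₀.2) fun x₁ ε hε => ?_
  exact eventually_skDist_comp_lt hd (directed_of_forall_exists_max_le hddir) htd (hζ j)
    (continuous_of_eq_pseudoTop htζ j) hψ (fun _ hx => hx) x₁ hε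

/-- Composition with a continuous map `ψ : E → F` between completely regular spaces maps
càdlàg functions to càdlàg functions, and the induced map between the Skorohod spaces
`D([0,1],E) → D([0,1],F)` is continuous (here the Skorohod topologies are given by
generating families of pseudometrics). -/
theorem skorohod_composition_continuous {E F : Type*} {I J : Type*}
    [tE : TopologicalSpace E] [CompletelyRegularSpace E]
    [tF : TopologicalSpace F] [CompletelyRegularSpace F]
    (d : I → E → E → ℝ) (ζ : J → F → F → ℝ)
    (hd : ∀ i, IsPseudometric (d i)) (hζ : ∀ j, IsPseudometric (ζ j))
    (hdsep : ∀ a b : E, a ≠ b → ∃ i, 0 < d i a b)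
    (hζsep : ∀ a b : F, a ≠ b → ∃ j, 0 < ζ j a b)
    (hddir : ∀ i i', ∃ k, ∀ a b, max (d i a b) (d i' a b) ≤ d k a b)
    (hζdir : ∀ j j', ∃ k, ∀ a b, max (ζ j a b) (ζ j' a b) ≤ ζ k a b)
    (htd : tE = pseudoTop d) (htζ : tF = pseudoTop ζ)
    (ψ : E → F) (hψ : Continuous ψ) :
    (∀ x : ℝ → E, Cadlag x → Cadlag (ψ ∘ x)) ∧
    ∃ Ψ : {x : ℝ → E | Cadlag x} → {y : ℝ → F | Cadlag y},
      (∀ x t, (Ψ x : ℝ → F) t = ψ ((x : ℝ → E) t)) ∧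
      @Continuous _ _ (skTop {x : ℝ → E | Cadlag x} d) (skTop {y : ℝ → F | Cadlag y} ζ)
        Ψ :=
  skorohod_composition_continuous_general (tE := tE) (tF := tF) d ζ hd hζ hdsep hddir htd htζ ψ hψ
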